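/- For all n ≥ 1, the number of nonnesting permutations of the multiset {1,1,2,2,…,n,n} that avoid the pattern 121 equals n!. -/

import Mathlib

/-- `w` is a permutation of the multiset `{1,1,2,2,…,n,n}`:
a word in which every value in `{1,…,n}` occurs exactly twice
and no other value occurs. -/
def IsMultisetPerm (n : ℕ) (w : List ℕ) : Prop :=
  ∀ i : ℕ, w.count i = if 1 ≤ i ∧ i ≤ n then 2 else 0

/-- `t` is order-isomorphic to the word `σ`:
same length, and entries compare (both `<` and `=`) in the same way. -/
def OrderIsoWord (t σ : List ℕ) : Prop :=
  t.length = σ.length ∧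
  ∀ r s : ℕ, r < σ.length → s < σ.length →
    ((t.getD r 0 < t.getD s 0 ↔ σ.getD r 0 < σ.getD s 0) ∧
     (t.getD r 0 = t.getD s 0 ↔ σ.getD r 0 = σ.getD s 0))

/-- `w` contains the pattern `σ`: some subsequence of `w`
is order-isomorphic to `σ`. -/
def Contains (w σ : List ℕ) : Prop :=
  ∃ t : List ℕ, t.Sublist w ∧ OrderIsoWord t σ

/-- `w` avoids the pattern `σ`. -/
def Avoids (w σ : List ℕ) : Prop := ¬ Contains w σ

/-- `w` is a nonnesting permutation of `{1,1,2,2,…,n,n}`: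
it avoids the patterns `1221` and `2112`. -/
def IsNonnesting (n : ℕ) (w : List ℕ) : Prop :=
  IsMultisetPerm n w ∧ Avoids w [1,2,2,1] ∧ Avoids w [2,1,1,2]

/-!
Reading a 121-avoiding nonnesting word from the left, its first letter `x` must be repeated
at once: if the next letter is `y ≠ x`, then `x y x` is a 121 when `x < y`, and when `y < x`
the second `y` yields either `x y y x` (a 2112) or `y x y` (a 121). Hence these words are
exactly the words `x₁ x₁ x₂ x₂ … xₙ xₙ` with `x₁ … xₙ` a permutation of `1 … n`; such a word
has no subsequence `a b a` with `a ≠ b`, so it avoids 121, 1221 and 2112.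
-/

open List

section Doubled

variable {α : Type*}

def doubled (l : List α) : List α := l.flatMap fun a => [a, a]

@[simp] lemma doubled_nil : doubled ([] : List α) = [] := rfl

@[simp] lemma doubled_cons (a : α) (l : List α) : doubled (a :: l) = a :: a :: doubled l := rfl

@[simp] lemma mem_doubled {a : α} {l : List α} : a ∈ doubled l ↔ a ∈ l := by
  simp [doubled]

lemma count_doubled [BEq α] [LawfulBEq α] (a : α) (l : List α) :
    (doubled l).count a = 2 * l.count a := by
  induction l with
  | nil => rfl
  | cons b l ih => simp only [doubled_cons, count_cons, ih]; split <;> omega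

lemma doubled_injective : Function.Injective (doubled : List α → List α)
  | [], [], _ => rfl
  | [], _ :: _, h | _ :: _, [], h => by simp at h
  | a :: l₁, b :: l₂, h => by
    simp only [doubled_cons, cons.injEq] at h
    rw [h.1, doubled_injective h.2.2]

lemma not_sublist_doubled {l : List α} (hl : l.Nodup) {a b : α} (hab : a ≠ b) :
    ¬ [a, b, a] <+ doubled l := by
  induction l with
  | nil => simp
  | cons c l ih =>
    rw [nodup_cons] at hl
    intro h
    by_cases hac : a = c
    · subst hac
      have hba : [b, a] <+ doubled l := h.of_cons_cons.of_cons_of_ne hab.symm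
      exact hl.1 (mem_doubled.1 (hba.subset (by simp)))
    · exact ih hl.2 ((h.of_cons_of_ne hac).of_cons_of_ne hac)

variable [LinearOrder α]

lemma head_eq_of_count_eq_two {x y : α} {rest : List α}
    (hcount : ∀ a ∈ x :: y :: rest, (x :: y :: rest).count a = 2)
    (haba : ∀ a b, a < b → ¬ [a, b, a] <+ x :: y :: rest)
    (habba : ∀ a b, b < a → ¬ [a, b, b, a] <+ x :: y :: rest) : x = y := by
  by_contra hxy
  have hx : x ∈ rest := by
    have := hcount x (by simp)
    rw [count_cons_self, count_cons_of_ne (Ne.symm hxy)] at this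
    exact count_pos_iff.1 (by omega)
  have hy : y ∈ rest := by
    have := hcount y (by simp)
    rw [count_cons_of_ne hxy, count_cons_self] at this
    exact count_pos_iff.1 (by omega)
  obtain ⟨s, t, rfl⟩ := append_of_mem hx
  rcases lt_or_gt_of_ne hxy with hlt | hgt
  · exact haba x y hlt (by simp)
  · have : y ∈ s ∨ y ∈ t := by simpa [Ne.symm hxy] using hy
    rcases this with hys | hyt
    · exact habba x y hgt (by
        simpa using (singleton_sublist.2 hys).append (singleton_sublist.2 mem_cons_self))
    · exact haba y x hgt (by simp [hyt])

theorem exists_doubled_eq_of_count_eq_two : ∀ w : List α,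
    (∀ a ∈ w, w.count a = 2) → (∀ a b, a < b → ¬ [a, b, a] <+ w) →
    (∀ a b, b < a → ¬ [a, b, b, a] <+ w) → ∃ l, doubled l = w
  | [], _, _, _ => ⟨[], rfl⟩
  | [x], hcount, _, _ => by simpa using hcount x
  | x :: y :: rest, hcount, haba, habba => by
    obtain rfl := head_eq_of_count_eq_two hcount haba habba
    have hrest : rest <+ x :: x :: rest := sublist_append_right [x, x] rest
    have hx : x ∉ rest := by
      have := hcount x (by simp)
      simp only [count_cons_self] at this
      exact count_eq_zero.1 (by omega)
    obtain ⟨l, rfl⟩ := exists_doubled_eq_of_count_eq_two rest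
      (fun a ha => by
        have hax : x ≠ a := (ne_of_mem_of_not_mem ha hx).symm
        simpa only [count_cons_of_ne hax] using hcount a (by simp [ha]))
      (fun a b hab h => haba a b hab (h.trans hrest))
      (fun a b hab h => habba a b hab (h.trans hrest))
    exact ⟨x :: l, rfl⟩

end Doubled

lemma orderIsoWord_aba_iff {t : List ℕ} {p q : ℕ} :
    OrderIsoWord t [p, q, p] ↔ ∃ a b, (a < b ↔ p < q) ∧ (b < a ↔ q < p) ∧ t = [a, b, a] := by
  constructor
  · rintro ⟨hlen, hrel⟩
    obtain ⟨a, b, c, rfl⟩ := length_eq_three.1 hlen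
    have h01 := (hrel 0 1 (by simp) (by simp)).1
    have h10 := (hrel 1 0 (by simp) (by simp)).1
    have h02 := (hrel 0 2 (by simp) (by simp)).2
    simp only [getD_cons_zero, getD_cons_succ] at h01 h10 h02
    exact ⟨a, b, h01, h10, by rw [h02.2 trivial]⟩
  · rintro ⟨a, b, hab, hba, rfl⟩
    refine ⟨rfl, fun r s hr hs => ?_⟩
    simp only [length_cons, length_nil] at hr hs
    interval_cases r <;> interval_cases s <;> simp [hab, hba] <;> omega

lemma orderIsoWord_abba_iff {t : List ℕ} {p q : ℕ} :
    OrderIsoWord t [p, q, q, p] ↔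
      ∃ a b, (a < b ↔ p < q) ∧ (b < a ↔ q < p) ∧ t = [a, b, b, a] := by
  constructor
  · rintro ⟨hlen, hrel⟩
    obtain ⟨a, b, c, d, rfl⟩ := length_eq_four.1 hlen
    have h01 := (hrel 0 1 (by simp) (by simp)).1
    have h10 := (hrel 1 0 (by simp) (by simp)).1
    have h03 := (hrel 0 3 (by simp) (by simp)).2
    have h12 := (hrel 1 2 (by simp) (by simp)).2
    simp only [getD_cons_zero, getD_cons_succ] at h01 h10 h03 h12
    exact ⟨a, b, h01, h10, by rw [h03.2 trivial, h12.2 trivial]⟩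
  · rintro ⟨a, b, hab, hba, rfl⟩
    refine ⟨rfl, fun r s hr hs => ?_⟩
    simp only [length_cons, length_nil] at hr hs
    interval_cases r <;> interval_cases s <;> simp [hab, hba] <;> omega

lemma contains_121_iff {w : List ℕ} :
    Contains w [1, 2, 1] ↔ ∃ a b, a < b ∧ [a, b, a] <+ w := by
  simp only [Contains, orderIsoWord_aba_iff]
  constructor
  · rintro ⟨_, h, a, b, hab, -, rfl⟩
    exact ⟨a, b, by simpa using hab, h⟩
  · rintro ⟨a, b, hab, h⟩
    exact ⟨_, h, a, b, by simpa using hab, by simpa using hab.not_gt, rfl⟩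

lemma contains_1221_iff {w : List ℕ} :
    Contains w [1, 2, 2, 1] ↔ ∃ a b, a < b ∧ [a, b, b, a] <+ w := by
  simp only [Contains, orderIsoWord_abba_iff]
  constructor
  · rintro ⟨_, h, a, b, hab, -, rfl⟩
    exact ⟨a, b, by simpa using hab, h⟩
  · rintro ⟨a, b, hab, h⟩
    exact ⟨_, h, a, b, by simpa using hab, by simpa using hab.not_gt, rfl⟩

lemma contains_2112_iff {w : List ℕ} :
    Contains w [2, 1, 1, 2] ↔ ∃ a b, b < a ∧ [a, b, b, a] <+ w := by
  simp only [Contains, orderIsoWord_abba_iff]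
  constructor
  · rintro ⟨_, h, a, b, -, hba, rfl⟩
    exact ⟨a, b, by simpa using hba, h⟩
  · rintro ⟨a, b, hba, h⟩
    exact ⟨_, h, a, b, by simpa using hba.not_gt, by simpa using hba, rfl⟩

lemma IsMultisetPerm.count_eq_two {n : ℕ} {w : List ℕ} (hw : IsMultisetPerm n w) {a : ℕ}
    (ha : a ∈ w) : w.count a = 2 := by
  have := hw a
  split_ifs at this
  · exact this
  · exact absurd ha (count_eq_zero.1 this)

lemma isMultisetPerm_doubled_iff {n : ℕ} {l : List ℕ} :
    IsMultisetPerm n (doubled l) ↔ l ~ range' 1 n := by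
  simp only [IsMultisetPerm, count_doubled, perm_iff_count, count_range_1']
  refine forall_congr' fun i => ?_
  split_ifs <;> omega

theorem isNonnesting_and_avoids_121_iff {n : ℕ} {w : List ℕ} :
    IsNonnesting n w ∧ Avoids w [1, 2, 1] ↔ ∃ l, l ~ range' 1 n ∧ doubled l = w := by
  constructor
  · rintro ⟨⟨hw, -, h2112⟩, h121⟩
    obtain ⟨l, rfl⟩ := exists_doubled_eq_of_count_eq_two w (fun a ha => hw.count_eq_two ha)
      (fun a b hab h => h121 (contains_121_iff.2 ⟨a, b, hab, h⟩))
      (fun a b hba h => h2112 (contains_2112_iff.2 ⟨a, b, hba, h⟩))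
    exact ⟨l, isMultisetPerm_doubled_iff.1 hw, rfl⟩
  · rintro ⟨l, hl, rfl⟩
    have haba : ∀ a b, a ≠ b → ¬ [a, b, a] <+ doubled l :=
      fun a b => not_sublist_doubled (hl.nodup_iff.2 nodup_range')
    have habba : ∀ a b, a ≠ b → ¬ [a, b, b, a] <+ doubled l :=
      fun a b hab h => haba a b hab ((by simp : [a, b, a] <+ [a, b, b, a]).trans h)
    refine ⟨⟨isMultisetPerm_doubled_iff.2 hl, fun h => ?_, fun h => ?_⟩, fun h => ?_⟩
    · obtain ⟨a, b, hab, h⟩ := contains_1221_iff.1 h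
      exact habba a b hab.ne h
    · obtain ⟨a, b, hba, h⟩ := contains_2112_iff.1 h
      exact habba a b hba.ne' h
    · obtain ⟨a, b, hab, h⟩ := contains_121_iff.1 h
      exact haba a b hab.ne h

lemma ncard_setOf_perm {α : Type*} {l : List α} (hl : l.Nodup) :
    {m | m ~ l}.ncard = l.length.factorial := by
  classical
  have : {m | m ~ l} = ↑l.permutations.toFinset := by
    ext
    simp [mem_permutations]
  rw [this, Set.ncard_coe_finset, toFinset_card_of_nodup (nodup_permutations l hl),
    length_permutations]

theorem nonnesting_avoid_121_general (n : ℕ) :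
    {w : List ℕ | IsNonnesting n w ∧ Avoids w [1,2,1]}.ncard = Nat.factorial n := by
  have hset : {w : List ℕ | IsNonnesting n w ∧ Avoids w [1,2,1]} =
      doubled '' {l | l ~ range' 1 n} :=
    Set.ext fun _ => isNonnesting_and_avoids_121_iff
  rw [hset, Set.ncard_image_of_injective _ doubled_injective, ncard_setOf_perm nodup_range',
    length_range']

theorem nonnesting_avoid_121 (n : ℕ) (hn : 1 ≤ n) :
    {w : List ℕ | IsNonnesting n w ∧ Avoids w [1,2,1]}.ncard = Nat.factorial n :=
  nonnesting_avoid_121_general n
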